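/- arXiv:2011.07349 — 2 statements merged into one kernel-verified Lean document; each statement's English description precedes it below -/
import Mathlib

section
/- Let F be a field of characteristic ≠ 2 and n ≥ 1. If τ₁ = τ_{ε₁} and τ₂ = τ_{ε₂} are two orthogonal involutions of GL_n(F) whose fixed-point subgroups coincide, GL_n(F)^{τ₁} = GL_n(F)^{τ₂}, then τ₁ = τ₂. -/
open Matrix

section Aux

variable {n : ℕ} {F : Type} [Field F]

private lemma vmv_mul_vmv (a b c d : Fin n → F) :
    vecMulVec a b * vecMulVec c d = (b ⬝ᵥ c) • vecMulVec a d := by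
  ext i j
  simp only [Matrix.mul_apply, vecMulVec_apply, dotProduct, Matrix.smul_apply, smul_eq_mul,
    Finset.sum_mul, Finset.mul_sum]
  exact Finset.sum_congr rfl fun k _ => by ring

private lemma mul_vmv (M : Matrix (Fin n) (Fin n) F) (a b : Fin n → F) :
    M * vecMulVec a b = vecMulVec (M *ᵥ a) b := by
  ext i j
  simp only [Matrix.mul_apply, vecMulVec_apply, mulVec, dotProduct, Finset.sum_mul]
  exact Finset.sum_congr rfl fun k _ => by ring

private lemma vmv_mul (a b : Fin n → F) (M : Matrix (Fin n) (Fin n) F) :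
    vecMulVec a b * M = vecMulVec a (Mᵀ *ᵥ b) := by
  ext i j
  simp only [Matrix.mul_apply, vecMulVec_apply, mulVec, dotProduct, transpose_apply,
    Finset.mul_sum]
  exact Finset.sum_congr rfl fun k _ => by ring

private lemma vmv_mulVec (a b w : Fin n → F) :
    vecMulVec a b *ᵥ w = (b ⬝ᵥ w) • a := by
  ext i
  simp only [mulVec, dotProduct, vecMulVec_apply, Pi.smul_apply, smul_eq_mul, Finset.sum_mul]
  exact Finset.sum_congr rfl fun k _ => by ring

private lemma vmv_transpose (a b : Fin n → F) :
    (vecMulVec a b)ᵀ = vecMulVec b a := by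
  ext i j
  simp [vecMulVec_apply, mul_comm]

private lemma dp_symm {ε : Matrix (Fin n) (Fin n) F} (hs : ε.IsSymm) (u v : Fin n → F) :
    u ⬝ᵥ (ε *ᵥ v) = v ⬝ᵥ (ε *ᵥ u) := by
  rw [dotProduct_mulVec, dotProduct_comm, ← mulVec_transpose, hs.eq]

private lemma q_add (ε : Matrix (Fin n) (Fin n) F) (u v : Fin n → F) :
    (u + v) ⬝ᵥ (ε *ᵥ (u + v)) =
      u ⬝ᵥ (ε *ᵥ u) + v ⬝ᵥ (ε *ᵥ v) + (u ⬝ᵥ (ε *ᵥ v) + v ⬝ᵥ (ε *ᵥ u)) := by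
  simp only [mulVec_add, dotProduct_add, add_dotProduct]
  ring

private lemma q_smul (ε : Matrix (Fin n) (Fin n) F) (s : F) (u : Fin n → F) :
    (s • u) ⬝ᵥ (ε *ᵥ (s • u)) = s * s * (u ⬝ᵥ (ε *ᵥ u)) := by
  simp only [mulVec_smul, smul_dotProduct, dotProduct_smul, smul_eq_mul]
  ring

/-- The key reflection lemma: if every `τ_ε`-fixed point is `τ_{ε'}`-fixed, then for every
anisotropic `v` (w.r.t. `ε`) we have `q(v) • (ε' v) = q'(v) • (ε v)`. -/
private lemma reflection_step {ε ε' : Matrix (Fin n) (Fin n) F}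
    (hs : ε.IsSymm) (hd : IsUnit ε.det) (hd' : IsUnit ε'.det)
    (h2 : (2 : F) ≠ 0)
    (himp : ∀ x : Matrix (Fin n) (Fin n) F, IsUnit x.det →
      ε⁻¹ * (xᵀ)⁻¹ * ε = x → ε'⁻¹ * (xᵀ)⁻¹ * ε' = x)
    (v : Fin n → F) (hq : v ⬝ᵥ (ε *ᵥ v) ≠ 0) :
    (v ⬝ᵥ (ε *ᵥ v)) • (ε' *ᵥ v) = (v ⬝ᵥ (ε' *ᵥ v)) • (ε *ᵥ v) := by
  set q : F := v ⬝ᵥ (ε *ᵥ v) with hqdef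
  set c : F := 2 / q with hcdef
  set V : Matrix (Fin n) (Fin n) F := vecMulVec v (ε *ᵥ v) with hV
  set R : Matrix (Fin n) (Fin n) F := 1 - c • V with hRdef
  have hVV : V * V = q • V := by
    rw [hV, vmv_mul_vmv, dotProduct_comm, ← hqdef]
  have hRR : R * R = 1 := by
    have hcc : c * (c * q) = c + c := by
      rw [hcdef]; field_simp; ring
    rw [hRdef]
    simp only [sub_mul, mul_sub, one_mul, mul_one, Matrix.smul_mul, Matrix.mul_smul, hVV,
      smul_smul, hcc, add_smul]
    abel
  have hdetR : IsUnit R.det := by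
    have h1 : R.det * R.det = 1 := by
      rw [← det_mul, hRR, det_one]
    exact IsUnit.of_mul_eq_one _ h1
  have hRT : Rᵀ = 1 - c • vecMulVec (ε *ᵥ v) v := by
    rw [hRdef, transpose_sub, transpose_one, transpose_smul, hV, vmv_transpose]
  have hRTR : Rᵀ * ε' = ε' * R → vecMulVec (ε *ᵥ v) (ε'ᵀ *ᵥ v) = vecMulVec (ε' *ᵥ v) (ε *ᵥ v) := by
    intro h
    have expand : ε' - c • vecMulVec (ε *ᵥ v) (ε'ᵀ *ᵥ v) = ε' - c • vecMulVec (ε' *ᵥ v) (ε *ᵥ v) := by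
      calc ε' - c • vecMulVec (ε *ᵥ v) (ε'ᵀ *ᵥ v)
          = (1 - c • vecMulVec (ε *ᵥ v) v) * ε' := by
            rw [sub_mul, one_mul, Matrix.smul_mul, vmv_mul]
        _ = ε' * R := by rw [← hRT, h]
        _ = ε' - c • vecMulVec (ε' *ᵥ v) (ε *ᵥ v) := by
            rw [hRdef, mul_sub, mul_one, Matrix.mul_smul, hV, mul_vmv]
    have hcne : c ≠ 0 := div_ne_zero h2 hq
    have := sub_right_injective expand
    exact smul_right_injective _ hcne this
  -- R is τ_ε-fixed
  have hεR : Rᵀ * ε = ε * R := by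
    rw [hRT, hRdef, sub_mul, mul_sub, one_mul, mul_one, Matrix.smul_mul, Matrix.mul_smul,
      vmv_mul, mul_vmv, hs.eq]
  have hRTinv : (Rᵀ)⁻¹ = Rᵀ := by
    apply inv_eq_right_inv
    rw [← transpose_mul, hRR, transpose_one]
  have hfixed : ε⁻¹ * (Rᵀ)⁻¹ * ε = R := by
    rw [hRTinv, Matrix.mul_assoc, hεR, ← Matrix.mul_assoc, nonsing_inv_mul _ hd, one_mul]
  have hfixed' := himp R hdetR hfixed
  rw [hRTinv] at hfixed'
  have hcomm : Rᵀ * ε' = ε' * R := by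
    have := congrArg (fun M => ε' * M) hfixed'
    simpa only [← Matrix.mul_assoc, mul_nonsing_inv _ hd', one_mul] using this
  have hkey := hRTR hcomm
  have := congrArg (fun M => M *ᵥ v) hkey
  simp only [vmv_mulVec] at this
  rw [show ((ε'ᵀ *ᵥ v) ⬝ᵥ v) = v ⬝ᵥ (ε' *ᵥ v) by
        rw [mulVec_transpose, dotProduct_mulVec],
      show ((ε *ᵥ v) ⬝ᵥ v) = q by rw [dotProduct_comm, ← hqdef]] at this
  rw [this]

end Aux

/-- over a field of characteristic `≠ 2`, two orthogonal involutions
`τ_{ε₁}, τ_{ε₂}` of `GL_n(F)` (where `τ_ε(x) = ε⁻¹ ᵗx⁻¹ ε`) with the same fixed-point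
subgroup are equal. -/
theorem orthogonal_involution_eq_of_fixed_points_eq
    (F : Type) [Field F] (hchar : ringChar F ≠ 2) {n : ℕ} (hn : 1 ≤ n)
    (ε₁ ε₂ : Matrix (Fin n) (Fin n) F)
    (hs₁ : ε₁.IsSymm) (hs₂ : ε₂.IsSymm)
    (hd₁ : IsUnit ε₁.det) (hd₂ : IsUnit ε₂.det)
    (hfix : ∀ x : Matrix (Fin n) (Fin n) F, IsUnit x.det →
      (ε₁⁻¹ * (xᵀ)⁻¹ * ε₁ = x ↔ ε₂⁻¹ * (xᵀ)⁻¹ * ε₂ = x)) :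
    ∀ x : Matrix (Fin n) (Fin n) F, IsUnit x.det →
      ε₁⁻¹ * (xᵀ)⁻¹ * ε₁ = ε₂⁻¹ * (xᵀ)⁻¹ * ε₂ := by
  have h2 : (2 : F) ≠ 0 := Ring.two_ne_zero hchar
  set q₁ : (Fin n → F) → F := fun v => v ⬝ᵥ (ε₁ *ᵥ v) with hq₁
  set q₂ : (Fin n → F) → F := fun v => v ⬝ᵥ (ε₂ *ᵥ v) with hq₂
  -- direction 1
  have F1 : ∀ v, q₁ v ≠ 0 → q₁ v • (ε₂ *ᵥ v) = q₂ v • (ε₁ *ᵥ v) :=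
    fun v hv => reflection_step hs₁ hd₁ hd₂ h2 (fun x hx => (hfix x hx).mp) v hv
  have F2 : ∀ v, q₂ v ≠ 0 → q₂ v • (ε₁ *ᵥ v) = q₁ v • (ε₂ *ᵥ v) :=
    fun v hv => reflection_step hs₂ hd₂ hd₁ h2 (fun x hx => (hfix x hx).mpr) v hv
  -- K2 : q₂ v ≠ 0 → q₁ v ≠ 0
  have K2 : ∀ v, q₂ v ≠ 0 → q₁ v ≠ 0 := by
    intro v hv h1
    have h := F2 v hv
    rw [h1, zero_smul] at h
    have hε₁v : ε₁ *ᵥ v = 0 := by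
      rcases smul_eq_zero.mp h with h' | h'
      · exact absurd h' hv
      · exact h'
    have hv0 : v = 0 := by
      have : ε₁⁻¹ *ᵥ (ε₁ *ᵥ v) = v := by
        rw [mulVec_mulVec, nonsing_inv_mul _ hd₁, one_mulVec]
      rw [hε₁v, mulVec_zero] at this
      exact this.symm
    apply hv
    rw [hq₂, hv0]
    simp
  -- the scalar function
  set l : (Fin n → F) → F := fun v => q₂ v / q₁ v with hl
  have hvec : ∀ v, q₁ v ≠ 0 → ε₂ *ᵥ v = l v • (ε₁ *ᵥ v) := by
    intro v hv
    have h := F1 v hv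
    have := congrArg (fun w => (q₁ v)⁻¹ • w) h
    simpa only [smul_smul, inv_mul_cancel₀ hv, one_smul, hl, div_eq_inv_mul, mul_comm] using this
  have hq2eq : ∀ v, q₁ v ≠ 0 → q₂ v = l v * q₁ v := by
    intro v hv
    rw [hl]
    field_simp
  -- independence helper
  have pair_aux : ∀ u v : Fin n → F, q₁ u ≠ 0 → q₁ v ≠ 0 → q₁ (u + v) ≠ 0 →
      (∀ a b : F, a • u + b • v = 0 → a = 0 ∧ b = 0) → l u = l v := by
    intro u v hu hv huv hind
    have h1 := hvec u hu
    have h2' := hvec v hv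
    have h3 := hvec (u + v) huv
    rw [mulVec_add, mulVec_add, h1, h2', smul_add] at h3
    have hzero : (l u • (ε₁ *ᵥ u) + l v • (ε₁ *ᵥ v)) -
        (l (u + v) • (ε₁ *ᵥ u) + l (u + v) • (ε₁ *ᵥ v)) = 0 := sub_eq_zero.mpr h3
    have hpre' : (l u • u + l v • v) - (l (u + v) • u + l (u + v) • v) = 0 := by
      have := congrArg (fun w => ε₁⁻¹ *ᵥ w) hzero
      simpa only [mulVec_sub, mulVec_add, mulVec_smul, mulVec_mulVec,
        nonsing_inv_mul _ hd₁, one_mulVec, mulVec_zero] using this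
    have hpre : (l u - l (u + v)) • u + (l v - l (u + v)) • v = 0 := by
      rw [← hpre']; module
    obtain ⟨ha, hb⟩ := hind _ _ hpre
    have e1 : l u = l (u + v) := sub_eq_zero.mp ha
    have e2 : l v = l (u + v) := sub_eq_zero.mp hb
    rw [e1, e2]
  -- basic q-facts
  have qadd1 : ∀ u v : Fin n → F, q₁ (u + v) =
      q₁ u + q₁ v + (u ⬝ᵥ (ε₁ *ᵥ v) + v ⬝ᵥ (ε₁ *ᵥ u)) := fun u v => q_add ε₁ u v
  have qadd2 : ∀ u v : Fin n → F, q₂ (u + v) =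
      q₂ u + q₂ v + (u ⬝ᵥ (ε₂ *ᵥ v) + v ⬝ᵥ (ε₂ *ᵥ u)) := fun u v => q_add ε₂ u v
  have qsmul1 : ∀ (s : F) (u : Fin n → F), q₁ (s • u) = s * s * q₁ u :=
    fun s u => q_smul ε₁ s u
  have qsmul2 : ∀ (s : F) (u : Fin n → F), q₂ (s • u) = s * s * q₂ u :=
    fun s u => q_smul ε₂ s u
  have qneg1 : ∀ u : Fin n → F, q₁ (-u) = q₁ u := by
    intro u
    have := qsmul1 (-1) u
    rw [neg_one_smul] at this
    rw [this]; ring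
  -- l is scale invariant
  have lsmul : ∀ (s : F) (u : Fin n → F), s ≠ 0 → l (s • u) = l u := by
    intro s u hs0
    show q₂ (s • u) / q₁ (s • u) = q₂ u / q₁ u
    rw [qsmul1, qsmul2, mul_div_mul_left _ _ (mul_ne_zero hs0 hs0)]
  have hvne : ∀ v : Fin n → F, q₁ v ≠ 0 → v ≠ 0 := by
    intro v hv h0
    apply hv
    rw [h0]
    show (0 : Fin n → F) ⬝ᵥ (ε₁ *ᵥ 0) = 0
    simp
  -- the pair lemma
  have pair : ∀ u v : Fin n → F, q₁ u ≠ 0 → q₁ v ≠ 0 → l u = l v := by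
    intro u v hu hv
    by_cases hdep : ∃ s : F, v = s • u
    · obtain ⟨s, rfl⟩ := hdep
      have hs0 : s ≠ 0 := by
        rintro rfl
        rw [zero_smul] at hv
        exact hv (by show (0 : Fin n → F) ⬝ᵥ (ε₁ *ᵥ 0) = 0; simp)
      exact (lsmul s u hs0).symm
    by_cases hdep2 : ∃ s : F, u = s • v
    · obtain ⟨s, rfl⟩ := hdep2
      have hs0 : s ≠ 0 := by
        rintro rfl
        rw [zero_smul] at hu
        exact hu (by show (0 : Fin n → F) ⬝ᵥ (ε₁ *ᵥ 0) = 0; simp)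
      exact lsmul s v hs0
    -- independent case
    have hind : ∀ a b : F, a • u + b • v = 0 → a = 0 ∧ b = 0 := by
      intro a b hab
      by_cases ha : a = 0
      · refine ⟨ha, ?_⟩
        rw [ha, zero_smul, zero_add] at hab
        rcases smul_eq_zero.mp hab with h | h
        · exact h
        · exact absurd h (hvne v hv)
      · exfalso
        have h1 : a • u = -(b • v) := eq_neg_of_add_eq_zero_left hab
        have h2 : u = (a⁻¹ * (-b)) • v := by
          rw [← smul_smul, neg_smul, ← h1, smul_smul, inv_mul_cancel₀ ha, one_smul]
        exact hdep2 ⟨_, h2⟩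
    by_cases hz : q₁ (u + v) ≠ 0
    · exact pair_aux u v hu hv hz hind
    by_cases hz2 : q₁ (u - v) ≠ 0
    · have hvneg : q₁ (-v) ≠ 0 := by rw [qneg1]; exact hv
      have hz2' : q₁ (u + -v) ≠ 0 := by rw [← sub_eq_add_neg]; exact hz2
      have hind' : ∀ a b : F, a • u + b • (-v) = 0 → a = 0 ∧ b = 0 := by
        intro a b hab
        rw [smul_neg, ← neg_smul] at hab
        obtain ⟨ha, hb⟩ := hind a (-b) hab
        exact ⟨ha, neg_eq_zero.mp hb⟩
      have := pair_aux u (-v) hu hvneg hz2' hind'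
      rw [this, show -v = (-1 : F) • v by rw [neg_one_smul], lsmul (-1) v (by simp)]
    -- degenerate case : q₁(u+v) = q₁(u-v) = 0
    push_neg at hz hz2
    set B : F := u ⬝ᵥ (ε₁ *ᵥ v) with hB
    have hsymB : v ⬝ᵥ (ε₁ *ᵥ u) = B := dp_symm hs₁ v u
    have hplus : q₁ u + q₁ v + (B + B) = 0 := by
      rw [← hz, qadd1, hsymB]
    have hminus : q₁ u + q₁ v - (B + B) = 0 := by
      have h1 : q₁ (u + -v) = 0 := by rw [← sub_eq_add_neg]; exact hz2
      rw [qadd1] at h1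
      have e1 : q₁ (-v) = q₁ v := qneg1 v
      have e2 : u ⬝ᵥ (ε₁ *ᵥ (-v)) = -B := by rw [mulVec_neg, dotProduct_neg, hB]
      have e3 : (-v) ⬝ᵥ (ε₁ *ᵥ u) = -B := by rw [neg_dotProduct, hsymB]
      rw [e1, e2, e3] at h1
      rw [← h1]; ring
    have hB0 : B = 0 := by
      have h4 : (2 : F) * (2 * B) = 0 := by linear_combination hplus - hminus
      rcases mul_eq_zero.mp h4 with h | h
      · exact absurd h h2
      rcases mul_eq_zero.mp h with h' | h'
      · exact absurd h' h2
      · exact h'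
    have hqv : q₁ v = -q₁ u := by linear_combination hplus - (2 : F) * hB0
    -- now use q₂(u+v) = 0
    have hq2uv : q₂ (u + v) = 0 := by
      by_contra h
      exact hz.symm.trans_ne (K2 (u + v) h) rfl
    rw [qadd2] at hq2uv
    have e4 : u ⬝ᵥ (ε₂ *ᵥ v) = l v * B := by
      rw [hvec v hv, dotProduct_smul, smul_eq_mul, hB]
    have e5 : v ⬝ᵥ (ε₂ *ᵥ u) = l u * B := by
      rw [hvec u hu, dotProduct_smul, smul_eq_mul, hsymB]
    rw [e4, e5, hq2eq u hu, hq2eq v hv, hqv, hB0] at hq2uv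
    have : (l u - l v) * q₁ u = 0 := by linear_combination hq2uv
    rcases mul_eq_zero.mp this with h | h
    · exact sub_eq_zero.mp h
    · exact absurd h hu
  -- existence of an anisotropic vector
  have hex : ∃ u₀ : Fin n → F, q₁ u₀ ≠ 0 := by
    by_contra hall
    push_neg at hall
    have hent : ∀ i j, ε₁ i j = 0 := by
      intro i j
      have h1 := hall (Pi.single i 1 + Pi.single j 1)
      rw [qadd1] at h1
      have e1 : q₁ (Pi.single i 1) = 0 := hall _
      have e2 : q₁ (Pi.single j 1) = 0 := hall _
      have e3 : (Pi.single i 1 : Fin n → F) ⬝ᵥ (ε₁ *ᵥ Pi.single j 1) = ε₁ i j := by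
        simp [mulVec_single, single_dotProduct]
      have e4 : (Pi.single j 1 : Fin n → F) ⬝ᵥ (ε₁ *ᵥ Pi.single i 1) = ε₁ j i := by
        simp [mulVec_single, single_dotProduct]
      have e5 : ε₁ j i = ε₁ i j := by
        conv_lhs => rw [← hs₁.eq]
        simp [Matrix.transpose_apply]
      rw [e1, e2, e3, e4, e5] at h1
      have h6 : (2 : F) * ε₁ i j = 0 := by linear_combination h1
      rcases mul_eq_zero.mp h6 with h | h
      · exact absurd h h2
      · exact h
    have hzero : ε₁ = 0 := by ext i j; exact hent i j
    rw [hzero, (haveI : Nonempty (Fin n) := ⟨⟨0, hn⟩⟩; det_zero)] at hd₁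
    exact hd₁.ne_zero rfl
  obtain ⟨u₀, hu₀⟩ := hex
  -- global scalar
  have key : ∀ z : Fin n → F, q₁ z ≠ 0 → ε₂ *ᵥ z = l u₀ • (ε₁ *ᵥ z) := by
    intro z hz
    rw [hvec z hz, pair z u₀ hz hu₀]
  have all : ∀ w : Fin n → F, ε₂ *ᵥ w = l u₀ • (ε₁ *ᵥ w) := by
    intro w
    by_cases hw : q₁ w ≠ 0
    · exact key w hw
    push_neg at hw
    have hcase : q₁ (w + u₀) ≠ 0 ∨ q₁ (w + -u₀) ≠ 0 := by
      by_contra hno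
      push_neg at hno
      obtain ⟨ha, hb⟩ := hno
      rw [qadd1] at ha hb
      have e1 : q₁ (-u₀) = q₁ u₀ := qneg1 u₀
      have e2 : w ⬝ᵥ (ε₁ *ᵥ (-u₀)) = -(w ⬝ᵥ (ε₁ *ᵥ u₀)) := by rw [mulVec_neg, dotProduct_neg]
      have e3 : (-u₀) ⬝ᵥ (ε₁ *ᵥ w) = -(u₀ ⬝ᵥ (ε₁ *ᵥ w)) := by rw [neg_dotProduct]
      rw [e1, e2, e3] at hb
      apply hu₀
      have h4 : (2 : F) * q₁ u₀ = 0 := by linear_combination ha + hb - (2:F) * hw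
      rcases mul_eq_zero.mp h4 with h | h
      · exact absurd h h2
      · exact h
    rcases hcase with hz | hz
    · have e1 := key _ hz
      have e2 := key u₀ hu₀
      rw [mulVec_add, mulVec_add, e2] at e1
      have := congrArg (fun y => y - l u₀ • (ε₁ *ᵥ u₀)) e1
      simpa only [add_sub_cancel_right, smul_add, add_sub_cancel_right] using this
    · have e1 := key _ hz
      have e2 := key u₀ hu₀
      rw [mulVec_add, mulVec_add, mulVec_neg, mulVec_neg, e2] at e1
      have := congrArg (fun y => y + l u₀ • (ε₁ *ᵥ u₀)) e1
      simpa only [smul_add, smul_neg, neg_add_cancel_right] using this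
  -- conclude ε₂ = c • ε₁
  have hmat : ε₂ = l u₀ • ε₁ := by
    ext i j
    have h := congrFun (all (Pi.single j 1)) i
    simp only [mulVec_single, mul_one, Pi.smul_apply, smul_eq_mul] at h
    simpa [Matrix.smul_apply, smul_eq_mul] using h
  have hcc0 : l u₀ ≠ 0 := by
    intro hc
    rw [hc, zero_smul] at hmat
    rw [hmat, (haveI : Nonempty (Fin n) := ⟨⟨0, hn⟩⟩; det_zero)] at hd₂
    exact hd₂.ne_zero rfl
  have hinv2 : ε₂⁻¹ = (l u₀)⁻¹ • ε₁⁻¹ := by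
    apply inv_eq_right_inv
    rw [hmat, Matrix.smul_mul, Matrix.mul_smul, smul_smul, mul_nonsing_inv _ hd₁,
      mul_inv_cancel₀ hcc0, one_smul]
  intro x hx
  rw [hinv2, hmat, Matrix.smul_mul, Matrix.smul_mul, Matrix.mul_smul, smul_smul,
    inv_mul_cancel₀ hcc0, one_smul]
end

section
/- Let E be a field and let E_m/E be a field extension of degree m. Let ε₀ ∈ GL_m(E) be symmetric and ι₀ : E_m → M_m(E) an E-algebra embedding whose image consists of ε₀-symmetric matrices (ε₀^{-1} ᵗι₀(x) ε₀ = ι₀(x) for all x ∈ E_m). Then for any symmetric ε ∈ GL_m(E) admitting an ε-symmetric E-algebra embedding ι : E_m → M_m(E), the matrix ε is congruent (ε ↦ ᵗg ε g) to an element of ε₀ ι₀(E_m^×). -/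
open Matrix

section Aux

variable (E : Type) [Field E] (Em : Type) [Field Em] [Algebra E Em] {m : ℕ}

/-- `Fin m → E` as a module over `Em` via an algebra embedding `ι`. -/
@[nolint unusedArguments]
def ModV (_ι : Em →ₐ[E] Matrix (Fin m) (Fin m) E) : Type := Fin m → E

variable (ι : Em →ₐ[E] Matrix (Fin m) (Fin m) E)

instance : AddCommGroup (ModV E Em ι) := inferInstanceAs (AddCommGroup (Fin m → E))
instance : Module E (ModV E Em ι) := inferInstanceAs (Module E (Fin m → E))

instance : SMul Em (ModV E Em ι) := ⟨fun x v => (ι x).mulVec v⟩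

lemma ModV.smul_def (x : Em) (v : ModV E Em ι) : x • v = (ι x).mulVec v := rfl

instance : Module Em (ModV E Em ι) where
  one_smul v := by show (ι 1).mulVec v = v; rw [_root_.map_one]; exact one_mulVec _
  mul_smul x y v := by
    show (ι (x * y)).mulVec v = (ι x).mulVec ((ι y).mulVec v)
    rw [_root_.map_mul]; exact (mulVec_mulVec _ _ _).symm
  smul_add x v w := by show (ι x).mulVec (v + w) = _; exact mulVec_add _ _ _
  smul_zero x := by show (ι x).mulVec 0 = 0; rw [mulVec_zero]
  add_smul x y v := by
    show (ι (x + y)).mulVec v = (ι x).mulVec v + (ι y).mulVec v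
    rw [_root_.map_add]; exact add_mulVec _ _ _
  zero_smul v := by show (ι 0).mulVec v = 0; rw [_root_.map_zero]; exact zero_mulVec _

instance : IsScalarTower E Em (ModV E Em ι) := ⟨fun a x v => by
  show (ι (a • x)).mulVec v = a • (ι x).mulVec v
  rw [_root_.map_smul]; exact smul_mulVec _ _ _⟩

instance : FiniteDimensional E (ModV E Em ι) :=
  inferInstanceAs (FiniteDimensional E (Fin m → E))

lemma ModV.finrank_E : Module.finrank E (ModV E Em ι) = m :=
  Module.finrank_fin_fun E

lemma ModV.finrank_Em (hm : 0 < m) (hdeg : Module.finrank E Em = m) :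
    Module.finrank Em (ModV E Em ι) = 1 := by
  have hfd : FiniteDimensional E Em := .of_finrank_pos (hdeg ▸ hm)
  have := Module.finrank_mul_finrank E Em (ModV E Em ι)
  rw [hdeg, ModV.finrank_E] at this
  have : m * Module.finrank Em (ModV E Em ι) = m * 1 := by simpa using this
  exact Nat.eq_of_mul_eq_mul_left hm this

instance : Module.Finite Em (ModV E Em ι) :=
  Module.Finite.of_restrictScalars_finite E Em (ModV E Em ι)

/-- The centralizer of `ι(Em)` in `M_m(E)` is `ι(Em)`. -/
lemma centralizer_eq (hm : 0 < m) (hdeg : Module.finrank E Em = m)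
    (δ : Matrix (Fin m) (Fin m) E) (hδ : ∀ x : Em, δ * ι x = ι x * δ) :
    ∃ y : Em, δ = ι y := by
  classical
  -- `δ` as an `Em`-linear endomorphism of `ModV`
  let f : ModV E Em ι →ₗ[Em] ModV E Em ι :=
    { toFun := fun v => δ.mulVec v
      map_add' := fun v w => mulVec_add δ v w
      map_smul' := fun x v => by
        show δ.mulVec ((ι x).mulVec v) = (ι x).mulVec (δ.mulVec v)
        exact (mulVec_mulVec (v : Fin m → E) δ (ι x)).trans ((congrArg (· *ᵥ (v : Fin m → E)) (hδ x)).trans (mulVec_mulVec (v : Fin m → E) (ι x) δ).symm) }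
  obtain b := Module.finBasisOfFinrankEq Em (ModV E Em ι)
    (ModV.finrank_Em E Em ι hm hdeg)
  set v₀ : ModV E Em ι := b 0 with hv₀
  obtain ⟨c, hfv₀⟩ : ∃ c : Em, f v₀ = c • v₀ := by
    refine ⟨b.repr (f v₀) 0, ?_⟩
    conv_lhs => rw [← b.sum_repr (f v₀)]
    simp [Fin.sum_univ_one, hv₀]
  refine ⟨c, ?_⟩
  have key : ∀ w : ModV E Em ι, f w = c • w := by
    intro w
    have hw : w = b.repr w 0 • v₀ := by
      conv_lhs => rw [← b.sum_repr w]
      simp [Fin.sum_univ_one, hv₀]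
    calc f w = f (b.repr w 0 • v₀) := by rw [← hw]
      _ = b.repr w 0 • f v₀ := LinearMap.map_smul f _ _
      _ = b.repr w 0 • (c • v₀) := by rw [hfv₀]
      _ = c • (b.repr w 0 • v₀) := smul_comm _ _ _
      _ = c • w := by rw [← hw]
  apply Matrix.toLin'.injective
  refine LinearMap.ext fun w => ?_
  have := key w
  rw [Matrix.toLin'_apply, Matrix.toLin'_apply]; exact this
end Aux

/-- let `E_m/E` be a field extension of degree `m`, `ε₀ ∈ GL_m(E)`
symmetric, and `ι₀ : E_m → M_m(E)` an `ε₀`-symmetric `E`-algebra embedding.  Then any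
symmetric `ε ∈ GL_m(E)` admitting an `ε`-symmetric `E`-algebra embedding of `E_m` is
congruent to an element of `ε₀ ι₀(E_m^×)`. -/
theorem symmetric_embedding_congruent
    (E : Type) [Field E] (Em : Type) [Field Em] [Algebra E Em]
    {m : ℕ} (hm : 0 < m) (hdeg : Module.finrank E Em = m)
    (ε₀ : Matrix (Fin m) (Fin m) E) (hs₀ : ε₀.IsSymm) (hd₀ : IsUnit ε₀.det)
    (ι₀ : Em →ₐ[E] Matrix (Fin m) (Fin m) E)
    (h₀ : ∀ x : Em, ε₀⁻¹ * (ι₀ x)ᵀ * ε₀ = ι₀ x)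
    (ε : Matrix (Fin m) (Fin m) E) (hs : ε.IsSymm) (hd : IsUnit ε.det)
    (ι : Em →ₐ[E] Matrix (Fin m) (Fin m) E)
    (h : ∀ x : Em, ε⁻¹ * (ι x)ᵀ * ε = ι x) :
    ∃ (g : Matrix (Fin m) (Fin m) E) (y : Em),
      IsUnit g.det ∧ y ≠ 0 ∧ gᵀ * ε * g = ε₀ * ι₀ y := by
  classical
  -- rewrite the symmetry conditions without inverses
  have h' : ∀ x : Em, (ι x)ᵀ * ε = ε * ι x := by
    intro x
    have := congrArg (fun A => ε * A) (h x)
    simpa [← Matrix.mul_assoc, Matrix.mul_nonsing_inv ε hd] using this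
  have h₀' : ∀ x : Em, (ι₀ x)ᵀ * ε₀ = ε₀ * ι₀ x := by
    intro x
    have := congrArg (fun A => ε₀ * A) (h₀ x)
    simpa [← Matrix.mul_assoc, Matrix.mul_nonsing_inv ε₀ hd₀] using this
  -- the intertwiner between the two module structures
  let e : ModV E Em ι₀ ≃ₗ[Em] ModV E Em ι :=
    LinearEquiv.ofFinrankEq _ _ (by
      rw [ModV.finrank_Em E Em ι₀ hm hdeg, ModV.finrank_Em E Em ι hm hdeg])
  let fC : (Fin m → E) →ₗ[E] (Fin m → E) := (e.restrictScalars E).toLinearMap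
  let fD : (Fin m → E) →ₗ[E] (Fin m → E) := (e.symm.restrictScalars E).toLinearMap
  let C : Matrix (Fin m) (Fin m) E := LinearMap.toMatrix' fC
  let D : Matrix (Fin m) (Fin m) E := LinearMap.toMatrix' fD
  have hCD : C * D = 1 := by
    rw [show C * D = LinearMap.toMatrix' (fC ∘ₗ fD) from (LinearMap.toMatrix'_comp fC fD).symm]
    have : fC ∘ₗ fD = LinearMap.id := by
      refine LinearMap.ext fun w => ?_
      exact e.apply_symm_apply w
    rw [this, LinearMap.toMatrix'_id]
  have hDC : D * C = 1 := by
    rw [show D * C = LinearMap.toMatrix' (fD ∘ₗ fC) from (LinearMap.toMatrix'_comp fD fC).symm]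
    have : fD ∘ₗ fC = LinearMap.id := by
      refine LinearMap.ext fun w => ?_
      exact e.symm_apply_apply w
    rw [this, LinearMap.toMatrix'_id]
  have hCdet : IsUnit C.det := Matrix.isUnit_det_of_left_inverse hDC
  -- intertwining relation : C * ι₀ x = ι x * C
  have hC : ∀ u : Fin m → E, C.mulVec u = e u := fun u => by
    show Matrix.toLin' (LinearMap.toMatrix' fC) u = _
    rw [Matrix.toLin'_toMatrix']; rfl
  have hint : ∀ x : Em, C * ι₀ x = ι x * C := by
    intro x
    apply Matrix.toLin'.injective
    refine LinearMap.ext fun w => ?_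
    show Matrix.toLin' (C * ι₀ x) w = Matrix.toLin' (ι x * C) w
    rw [Matrix.toLin'_apply, Matrix.toLin'_apply, ← mulVec_mulVec, ← mulVec_mulVec]
    have he : e ((ι₀ x).mulVec w) = (ι x).mulVec (e w) := by
      have h1 := _root_.map_smul e x (show ModV E Em ι₀ from w)
      rwa [ModV.smul_def, ModV.smul_def] at h1
    rw [hC, hC, he]
  -- the transported form
  set ε' : Matrix (Fin m) (Fin m) E := Cᵀ * ε * C with hε'
  have hε'symm : ∀ x : Em, (ι₀ x)ᵀ * ε' = ε' * ι₀ x := by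
    intro x
    have e1 : (C * ι₀ x)ᵀ = (ι x * C)ᵀ := by rw [hint]
    rw [Matrix.transpose_mul, Matrix.transpose_mul] at e1
    rw [hε']
    calc (ι₀ x)ᵀ * (Cᵀ * ε * C) = ((ι₀ x)ᵀ * Cᵀ) * (ε * C) := by
          simp only [Matrix.mul_assoc]
      _ = (Cᵀ * (ι x)ᵀ) * (ε * C) := by rw [e1]
      _ = Cᵀ * (((ι x)ᵀ * ε) * C) := by simp only [Matrix.mul_assoc]
      _ = Cᵀ * ((ε * ι x) * C) := by rw [h']
      _ = Cᵀ * (ε * (ι x * C)) := by simp only [Matrix.mul_assoc]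
      _ = Cᵀ * (ε * (C * ι₀ x)) := by rw [hint]
      _ = (Cᵀ * ε * C) * ι₀ x := by simp only [Matrix.mul_assoc]
  -- δ = ε₀⁻¹ ε' commutes with ι₀(Em)
  set δ : Matrix (Fin m) (Fin m) E := ε₀⁻¹ * ε' with hδdef
  have hδcomm : ∀ x : Em, δ * ι₀ x = ι₀ x * δ := by
    intro x
    have h1 : ε₀⁻¹ * (ι₀ x)ᵀ = ι₀ x * ε₀⁻¹ := by
      have := congrArg (fun A => A * ε₀⁻¹) (h₀ x)
      simpa [Matrix.mul_assoc, Matrix.mul_nonsing_inv ε₀ hd₀] using this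
    calc ε₀⁻¹ * ε' * ι₀ x = ε₀⁻¹ * ((ι₀ x)ᵀ * ε') := by rw [hε'symm, Matrix.mul_assoc]
      _ = (ε₀⁻¹ * (ι₀ x)ᵀ) * ε' := by rw [Matrix.mul_assoc]
      _ = ι₀ x * (ε₀⁻¹ * ε') := by rw [h1, Matrix.mul_assoc]
  obtain ⟨y, hy⟩ := centralizer_eq E Em ι₀ hm hdeg δ hδcomm
  refine ⟨C, y, hCdet, ?_, ?_⟩
  · -- y ≠ 0
    intro hy0
    rw [hy0, map_zero] at hy
    have : ε' = 0 := by
      have := congrArg (fun A => ε₀ * A) hy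
      simpa [hδdef, ← Matrix.mul_assoc, Matrix.mul_nonsing_inv ε₀ hd₀] using this
    have hne : Nonempty (Fin m) := Fin.pos_iff_nonempty.mp hm
    have hdet : ε'.det = 0 := by rw [this, @Matrix.det_zero _ _ _ _ _ hne]
    have hunit : IsUnit ε'.det := by
      rw [hε', Matrix.det_mul, Matrix.det_mul, Matrix.det_transpose]
      exact (hCdet.mul hd).mul hCdet
    rw [hdet] at hunit
    exact hunit.ne_zero rfl
  · -- ε' = ε₀ * ι₀ y
    have := congrArg (fun A => ε₀ * A) hy
    simpa [hδdef, ← Matrix.mul_assoc, Matrix.mul_nonsing_inv ε₀ hd₀] using this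
end
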